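/- Let K ⊊ L be a purely transcendental field extension (i.e., L = K(S) for some nonempty algebraically independent subset S of L over K) with #K ≥ 5. Then for every natural number m ≥ 1, the extension K ⊆ L fails to have the linear acyclic matching property at order m. -/

import Mathlib

section
variable {K L : Type*} [Field K] [Field L] [Algebra K L]

/-- A basis `v` of `A` is matched to a basis `w` of `B` if for every `b ∈ B` and
every `i`, `v i * b ∈ A` implies that `b` lies in the span of `w j`, `j ≠ i`. -/
def BasesMatched {n : ℕ} {A B : Submodule K L}
    (v : Module.Basis (Fin n) K A) (w : Module.Basis (Fin n) K B) : Prop :=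
  ∀ (b : B) (i : Fin n), (v i : L) * (b : L) ∈ A →
    b ∈ Submodule.span K (⇑w '' {j : Fin n | j ≠ i})

/-- `A` is matched with `B` if every basis of `A` can be matched to a basis of `B`. -/
def SubspaceMatched (n : ℕ) (A B : Submodule K L) : Prop :=
  ∀ v : Module.Basis (Fin n) K A, ∃ w : Module.Basis (Fin n) K B, BasesMatched v w

/-- The extension `K ⊆ L` has the linear matching property if for every `n ≥ 1` and
all `n`-dimensional subspaces `A`, `B` of `L` with `1 ∉ B`, `A` is matched with `B`. -/
def HasLinearMatchingProperty (K L : Type*) [Field K] [Field L] [Algebra K L] : Prop :=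
  ∀ n : ℕ, 1 ≤ n → ∀ A B : Submodule K L,
    Module.finrank K A = n → Module.finrank K B = n → (1 : L) ∉ B →
    SubspaceMatched n A B

/-- A strong matching from `A` to `B` is a linear isomorphism `φ : A → B` such that
every basis `v` of `A` is matched to the basis `φ ∘ v` of `B`. -/
def IsStrongMatching (n : ℕ) (A B : Submodule K L) (φ : A ≃ₗ[K] B) : Prop :=
  ∀ v : Module.Basis (Fin n) K A, BasesMatched v (v.map φ)

/-- Two strong matchings `f, g : A → B` are equivalent if there is a linear
isomorphism `φ : A → A` with `a * f a = φ a * g (φ a)` for all `a ∈ A`. -/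
def EquivStrongMatchings {A B : Submodule K L} (f g : A ≃ₗ[K] B) : Prop :=
  ∃ φ : A ≃ₗ[K] A, ∀ a : A, (a : L) * (f a : L) = (φ a : L) * (g (φ a) : L)

end

/-- The extension `K ⊆ L` fails to have the linear acyclic matching property at
order `m` if there are `m`-dimensional subspaces `A`, `B` of `L` and strong
matchings `f ≠ g` from `A` to `B` with `f ∼ g`. -/
def FailsLinearAcyclicAt (K L : Type*) [Field K] [Field L] [Algebra K L] (m : ℕ) : Prop :=
  ∃ (A B : Submodule K L) (f g : A ≃ₗ[K] B),
    Module.finrank K A = m ∧ Module.finrank K B = m ∧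
    IsStrongMatching m A B f ∧ IsStrongMatching m A B g ∧
    f ≠ g ∧ EquivStrongMatchings f g

/-!
Fix a transcendental `x ∈ L` and let `A` be the span of `x ^ m, …, x ^ (2 * m - 1)`. A product of
two nonzero elements of `A` has order at least `2 * m` in `x`, so it never lies in `A`. Hence the
matching condition is vacuous and every linear automorphism of `A` is a strong matching. Choosing
`d ∈ K` with `d ≠ 0` and `d ^ 2 ≠ 1` (possible as `#K ≥ 4`), the identity and `d⁻² • id` are
distinct, and equivalent via `φ = d • id` because `a * a = (d • a) * (d⁻² • d • a)`.
-/

open Polynomial Module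

section StrongMatching

variable {K L : Type*} [Field K] [Field L] [Algebra K L]

theorem isStrongMatching_of_mul_mem {n : ℕ} {A B : Submodule K L}
    (hAB : ∀ a ∈ A, ∀ b ∈ B, a * b ∈ A → a = 0 ∨ b = 0) (φ : A ≃ₗ[K] B) :
    IsStrongMatching n A B φ := by
  intro v b i hmem
  have hb : b = 0 := by
    rcases hAB _ (v i).2 _ b.2 hmem with hv | hb
    · exact absurd (Subtype.ext hv) (v.ne_zero i)
    · exact Subtype.ext hb
  rw [hb]
  exact Submodule.zero_mem _

theorem equivStrongMatchings_trans_smulOfNeZero {A B : Submodule K L} (f : A ≃ₗ[K] B)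
    {d : K} (hd : d ≠ 0) :
    EquivStrongMatchings f (f.trans (LinearEquiv.smulOfNeZero K B (d * d)⁻¹ (by simpa))) := by
  refine ⟨LinearEquiv.smulOfNeZero K A d hd, fun a => ?_⟩
  simp only [LinearEquiv.trans_apply, LinearEquiv.smulOfNeZero_apply, map_smul,
    Submodule.coe_smul, smul_smul, smul_mul_smul_comm]
  rw [show d * (d * (d * d)⁻¹) = 1 by field_simp, one_smul]

theorem trans_smulOfNeZero_ne_self {A B : Submodule K L} [Nontrivial A] (f : A ≃ₗ[K] B)
    {c : K} (hc : c ≠ 0) (hc1 : c ≠ 1) : f.trans (LinearEquiv.smulOfNeZero K B c hc) ≠ f := by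
  intro h
  obtain ⟨a, ha⟩ := exists_ne (0 : A)
  have hfa : c • f a = f a := LinearEquiv.congr_fun h a
  have : (c - 1) • f a = 0 := by rw [sub_smul (M := B), one_smul, hfa, sub_self]
  rcases smul_eq_zero.mp this with h1 | h0
  · exact hc1 (sub_eq_zero.mp h1)
  · exact ha (by simpa using h0)

theorem failsLinearAcyclicAt_of_mul_mem {m : ℕ} (hm : 1 ≤ m) {A : Submodule K L}
    (hA : finrank K A = m) (hmul : ∀ a ∈ A, ∀ b ∈ A, a * b ∈ A → a = 0 ∨ b = 0)
    {d : K} (hd : d ≠ 0) (hdd : d * d ≠ 1) : FailsLinearAcyclicAt K L m := by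
  have : Nontrivial A := Module.nontrivial_of_finrank_pos (R := K) (by omega)
  have hc : (d * d)⁻¹ ≠ 0 := by simpa
  refine ⟨A, A, LinearEquiv.refl K A, _, hA, hA, isStrongMatching_of_mul_mem hmul _,
    isStrongMatching_of_mul_mem hmul _, (trans_smulOfNeZero_ne_self _ hc ?_).symm,
    equivStrongMatchings_trans_smulOfNeZero _ hd⟩
  exact fun h => hdd (inv_eq_one.mp h)

end StrongMatching

theorem Polynomial.eq_zero_of_X_pow_mul_mem_degreeLT {R : Type*} [Semiring R] [Nontrivial R]
    {m : ℕ} {p : R[X]} (h : X ^ m * p ∈ degreeLT R m) : p = 0 := by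
  by_contra hp
  rw [mem_degreeLT, X_pow_mul, degree_mul_X_pow, degree_eq_natDegree hp] at h
  norm_cast at h
  omega

section PowerBlock

variable (K : Type*) {L : Type*} [Field K] [Field L] [Algebra K L]

/-- The span of `x ^ m, …, x ^ (2 * m - 1)`. -/
noncomputable def powerBlock (x : L) (m : ℕ) : Submodule K L :=
  (degreeLT K m).map ((aeval x).toLinearMap ∘ₗ LinearMap.mulLeft K (X ^ m))

variable {K} {x : L}

theorem finrank_powerBlock (hx : Transcendental K x) (m : ℕ) :
    finrank K (powerBlock K x m) = m := by
  have hinj : Function.Injective ((aeval x).toLinearMap ∘ₗ LinearMap.mulLeft K (X ^ m)) :=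
    (transcendental_iff_injective.mp hx).comp
      (mul_right_injective₀ (pow_ne_zero m X_ne_zero))
  rw [powerBlock, ← (Submodule.equivMapOfInjective _ hinj _).finrank_eq,
    (degreeLTEquiv K m).finrank_eq, finrank_fin_fun]

theorem eq_zero_or_eq_zero_of_mul_mem_powerBlock (hx : Transcendental K x) {m : ℕ} {a b : L}
    (ha : a ∈ powerBlock K x m) (hb : b ∈ powerBlock K x m)
    (hab : a * b ∈ powerBlock K x m) : a = 0 ∨ b = 0 := by
  obtain ⟨p, -, rfl⟩ := ha
  obtain ⟨q, -, rfl⟩ := hb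
  obtain ⟨r, hr, hrab⟩ := hab
  simp only [LinearMap.coe_comp, Function.comp_apply, LinearMap.mulLeft_apply,
    AlgHom.toLinearMap_apply, ← map_mul] at hrab ⊢
  have hpq : X ^ m * (p * q) = r := by
    refine mul_left_cancel₀ (pow_ne_zero m (X_ne_zero (R := K))) ?_
    rw [transcendental_iff_injective.mp hx hrab]
    ring
  rcases mul_eq_zero.mp (eq_zero_of_X_pow_mul_mem_degreeLT (hpq ▸ hr)) with h | h <;> simp [h]

end PowerBlock

theorem exists_ne_zero_mul_self_ne_one {K : Type*} [Field K] (hK : 4 ≤ Cardinal.mk K) :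
    ∃ d : K, d ≠ 0 ∧ d * d ≠ 1 := by
  classical
  by_contra! h
  have hsub : (Set.univ : Set K) ⊆ ↑({0, 1, -1} : Finset K) := by
    intro d _
    by_cases hd : d = 0
    · simp [hd]
    · simpa [hd] using mul_self_eq_one_iff.mp (h d hd)
  have : Cardinal.mk K ≤ 3 := by
    calc Cardinal.mk K = Cardinal.mk (Set.univ : Set K) := Cardinal.mk_univ.symm
      _ ≤ Cardinal.mk ↑({0, 1, -1} : Finset K) := Cardinal.mk_le_mk_of_subset hsub
      _ ≤ 3 := by rw [Cardinal.mk_coe_finset]; exact_mod_cast Finset.card_le_three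
  have := hK.trans this
  norm_num at this

theorem stmt18_general (K L : Type*) [Field K] [Field L] [Algebra K L]
    (S : Set L) (hSne : S.Nonempty)
    (hind : AlgebraicIndependent K ((↑) : S → L))
    (hK : 5 ≤ Cardinal.mk K) :
    ∀ m : ℕ, 1 ≤ m → FailsLinearAcyclicAt K L m := by
  intro m hm
  obtain ⟨x, hxS⟩ := hSne
  have hx : Transcendental K x := hind.transcendental ⟨x, hxS⟩
  obtain ⟨d, hd, hdd⟩ := exists_ne_zero_mul_self_ne_one (le_trans (by norm_num) hK)
  exact failsLinearAcyclicAt_of_mul_mem hm (finrank_powerBlock hx m)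
    (fun a ha b hb => eq_zero_or_eq_zero_of_mul_mem_powerBlock hx ha hb) hd hdd

/-- If `K ⊊ L` is a purely transcendental extension (generated by a nonempty
algebraically independent set) with `#K ≥ 5`, then for every `m ≥ 1` the extension
fails to have the linear acyclic matching property at order `m`. -/
theorem stmt18 (K L : Type*) [Field K] [Field L] [Algebra K L]
    (S : Set L) (hSne : S.Nonempty)
    (hind : AlgebraicIndependent K ((↑) : S → L))
    (hgen : IntermediateField.adjoin K S = ⊤)
    (hK : 5 ≤ Cardinal.mk K) :
    ∀ m : ℕ, 1 ≤ m → FailsLinearAcyclicAt K L m :=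
  stmt18_general K L S hSne hind hK
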